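/- Let d ≥ 1, p ≥ 1, κ ≥ d, and let f : ℝ^d → ℂ be continuously differentiable with f ∈ L^p(ℝ^d) and ‖∇f‖_{A^{κ,p}} < ∞. Then ‖f‖_{A^{κ+p,p}} ≤ ‖f‖_{L^p} + ‖∇f‖_{A^{κ,p}}; in particular f ∈ A^{κ+p,p}. -/

import Mathlib

open MeasureTheory
open scoped ENNReal NNReal

/-- `ℝ^d` as a Euclidean space. -/
abbrev E (d : ℕ) : Type := EuclideanSpace ℝ (Fin d)

/-- The `A^{κ,p}` norm: `sup_{R ≥ 0} (1+R)^{-κ/p} (∫ sup_{|z̄| ≤ R} ‖f(z+z̄)‖^p dz)^{1/p}`. -/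
noncomputable def Anorm {G F : Type*} [NormedAddCommGroup G] [MeasureSpace G]
    [NormedAddCommGroup F] (κ p : ℝ) (f : G → F) : ℝ≥0∞ :=
  ⨆ R : NNReal, (ENNReal.ofReal (1 + (R : ℝ))) ^ (-(κ / p)) *
    (∫⁻ z, ⨆ w ∈ Metric.closedBall (0 : G) (R : ℝ),
      ENNReal.ofReal (‖f (z + w)‖ ^ p)) ^ (1 / p)

/-!
By the mean value theorem, `|f(z + w)| ≤ |f z| + R sup_{|w| ≤ R} |∇f(z + w)|` for `|w| ≤ R`.
Taking `L^p` norms in `z` (Minkowski) gives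
`(∫ sup_{|w| ≤ R} |f(z + w)|^p dz)^{1/p} ≤ ‖f‖_{L^p} + R (1 + R)^{κ/p} ‖∇f‖_{A^{κ,p}}`,
and `R (1 + R)^{κ/p} ≤ (1 + R)^{(κ + p)/p}` absorbs the extra factor `R` into the weight of
`A^{κ+p,p}`.
-/

open Metric

section ballSup

variable {G F : Type*} [NormedAddCommGroup G] [NormedAddCommGroup F]

noncomputable def ballSup (φ : G → F) (R : ℝ) (z : G) : ℝ≥0∞ :=
  ⨆ w ∈ closedBall (0 : G) R, ‖φ (z + w)‖ₑ

lemma iSup_closedBall_ofReal_norm_rpow {p : ℝ} (hp : 0 < p) (φ : G → F) (R : ℝ) (z : G) :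
    ⨆ w ∈ closedBall (0 : G) R, ENNReal.ofReal (‖φ (z + w)‖ ^ p) = ballSup φ R z ^ p := by
  change _ = ENNReal.orderIsoRpow p hp (ballSup φ R z)
  simp only [ballSup, OrderIso.map_iSup]
  refine iSup_congr fun w => iSup_congr fun _ => ?_
  rw [← ofReal_norm]
  exact (ENNReal.ofReal_rpow_of_nonneg (norm_nonneg _) hp.le).symm

lemma Continuous.measurable_ballSup [MeasurableSpace G] [OpensMeasurableSpace G] {φ : G → F}
    (hφ : Continuous φ) (R : ℝ) : Measurable (ballSup φ R) :=
  (lowerSemicontinuous_biSup fun w _ =>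
    (hφ.comp (continuous_add_const w)).enorm.lowerSemicontinuous).measurable

lemma rpow_lintegral_ballSup_le_mul_Anorm [MeasureSpace G] {κ p : ℝ} (hp : 0 < p)
    (φ : G → F) (R : ℝ≥0) :
    (∫⁻ z, ballSup φ R z ^ p) ^ (1 / p) ≤
      ENNReal.ofReal (1 + R) ^ (κ / p) * Anorm κ p φ := by
  set c := ENNReal.ofReal (1 + R)
  have hc0 : c ≠ 0 := by simp [c]; positivity
  calc (∫⁻ z, ballSup φ R z ^ p) ^ (1 / p)
      = c ^ (κ / p) * (c ^ (-(κ / p)) * (∫⁻ z, ballSup φ R z ^ p) ^ (1 / p)) := by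
        rw [← mul_assoc, ← ENNReal.rpow_add _ _ hc0 ENNReal.ofReal_ne_top, add_neg_cancel,
          ENNReal.rpow_zero, one_mul]
    _ ≤ c ^ (κ / p) * Anorm κ p φ := by
        gcongr
        refine le_trans (le_of_eq ?_) (le_iSup _ R)
        simp only [c, iSup_closedBall_ofReal_norm_rpow hp]

end ballSup

section Taylor

variable {G F : Type*} [NormedAddCommGroup G] [NormedSpace ℝ G]
  [NormedAddCommGroup F] [NormedSpace ℝ F] {f : G → F}

lemma Differentiable.enorm_add_le_add_mul_ballSup_fderiv (hf : Differentiable ℝ f) {R : ℝ}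
    (z : G) {w : G} (hw : w ∈ closedBall (0 : G) R) :
    ‖f (z + w)‖ₑ ≤ ‖f z‖ₑ + ENNReal.ofReal R * ballSup (fderiv ℝ f) R z := by
  have hR : 0 ≤ R := nonneg_of_mem_closedBall hw
  have hwR : ‖w‖ ≤ R := by simpa using hw
  rcases eq_top_or_lt_top (ballSup (fderiv ℝ f) R z) with htop | hfin
  · rcases hR.eq_or_lt with rfl | hRpos
    · obtain rfl : w = 0 := by simpa using hw
      simp
    · simp [htop, ENNReal.mul_top, hRpos]
  set C := (ballSup (fderiv ℝ f) R z).toReal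
  have hderiv : ∀ x ∈ closedBall z R, ‖fderiv ℝ f x‖ ≤ C := by
    intro x hx
    have hxz : x - z ∈ closedBall (0 : G) R := by simpa [dist_eq_norm] using hx
    rw [← toReal_enorm, ← add_sub_cancel z x]
    exact ENNReal.toReal_mono hfin.ne
      (le_iSup₂ (f := fun w (_ : w ∈ closedBall (0 : G) R) => ‖fderiv ℝ f (z + w)‖ₑ)
        _ hxz)
  have hmvt : ‖f (z + w) - f z‖ ≤ C * ‖w‖ := by
    simpa using (convex_closedBall z R).norm_image_sub_le_of_norm_fderiv_le
      (fun x _ => hf.differentiableAt) hderiv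
      (mem_closedBall_self hR) (show z + w ∈ closedBall z R by simpa [dist_eq_norm] using hw)
  have hreal : ‖f (z + w)‖ ≤ ‖f z‖ + R * C := by
    nlinarith [norm_le_norm_add_norm_sub' (f (z + w)) (f z),
      ENNReal.toReal_nonneg (a := ballSup (fderiv ℝ f) R z)]
  calc ‖f (z + w)‖ₑ ≤ ENNReal.ofReal (‖f z‖ + R * C) := by
        rw [← ofReal_norm]; exact ENNReal.ofReal_le_ofReal hreal
    _ = ‖f z‖ₑ + ENNReal.ofReal R * ballSup (fderiv ℝ f) R z := by
        rw [ENNReal.ofReal_add (norm_nonneg _) (by positivity), ENNReal.ofReal_mul hR,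
          ofReal_norm, ENNReal.ofReal_toReal hfin.ne]

lemma Differentiable.ballSup_le_add_mul_ballSup_fderiv (hf : Differentiable ℝ f) (R : ℝ)
    (z : G) :
    ballSup f R z ≤ ‖f z‖ₑ + ENNReal.ofReal R * ballSup (fderiv ℝ f) R z :=
  iSup₂_le fun _ hw => hf.enorm_add_le_add_mul_ballSup_fderiv z hw

end Taylor

lemma ENNReal.rpow_lintegral_const_mul_rpow {α : Type*} [MeasurableSpace α] {μ : Measure α}
    {p : ℝ} (hp : 0 < p) (c : ℝ≥0∞) {g : α → ℝ≥0∞} (hg : Measurable g) :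
    (∫⁻ a, (c * g a) ^ p ∂μ) ^ (1 / p) = c * (∫⁻ a, g a ^ p ∂μ) ^ (1 / p) := by
  simp only [ENNReal.mul_rpow_of_nonneg _ _ hp.le]
  rw [lintegral_const_mul _ (hg.pow_const p), ENNReal.mul_rpow_of_nonneg _ _ (by positivity),
    ← ENNReal.rpow_mul, mul_one_div_cancel hp.ne', ENNReal.rpow_one]

lemma ENNReal.ofReal_one_add_rpow_neg_mul_le {κ p : ℝ} (hp : 0 < p) (hκ : 0 ≤ κ + p)
    (R : ℝ≥0) (N A : ℝ≥0∞) :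
    ENNReal.ofReal (1 + R) ^ (-((κ + p) / p)) * (N + R * (ENNReal.ofReal (1 + R) ^ (κ / p) * A))
      ≤ N + A := by
  set c := ENNReal.ofReal (1 + R)
  have hc1 : 1 ≤ c := ENNReal.one_le_ofReal.2 (by simp)
  have hc0 : c ≠ 0 := (zero_lt_one.trans_le hc1).ne'
  have hRc : (R : ℝ≥0∞) ≤ c := by
    rw [← ENNReal.ofReal_coe_nnreal]; exact ENNReal.ofReal_le_ofReal (by simp)
  have hweight : c ^ (-((κ + p) / p)) ≤ 1 := by
    simpa using ENNReal.rpow_le_rpow_of_exponent_le hc1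
      (neg_nonpos.2 (div_nonneg hκ hp.le) : -((κ + p) / p) ≤ 0)
  -- `(κ + p)/p = κ/p + 1`: one power of `1 + R` pays for the factor `R`
  have hR : R * (c ^ (-((κ + p) / p)) * c ^ (κ / p)) ≤ 1 := by
    rw [← ENNReal.rpow_add _ _ hc0 ENNReal.ofReal_ne_top,
      show -((κ + p) / p) + κ / p = -1 by field_simp; ring, ENNReal.rpow_neg_one]
    calc (R : ℝ≥0∞) * c⁻¹ ≤ c * c⁻¹ := by gcongr
      _ = 1 := ENNReal.mul_inv_cancel hc0 ENNReal.ofReal_ne_top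
  calc c ^ (-((κ + p) / p)) * (N + R * (c ^ (κ / p) * A))
      = c ^ (-((κ + p) / p)) * N + R * (c ^ (-((κ + p) / p)) * c ^ (κ / p)) * A := by ring
    _ ≤ 1 * N + 1 * A := by gcongr
    _ = N + A := by rw [one_mul, one_mul]

section Estimate

variable {G F : Type*} [NormedAddCommGroup G] [NormedSpace ℝ G] [MeasureSpace G]
  [OpensMeasurableSpace G] [NormedAddCommGroup F] [NormedSpace ℝ F] {f : G → F} {p : ℝ}

lemma ContDiff.rpow_lintegral_ballSup_le (hf : ContDiff ℝ 1 f) (hp : 1 ≤ p) (R : ℝ≥0) :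
    (∫⁻ z, ballSup f R z ^ p) ^ (1 / p) ≤ eLpNorm f (ENNReal.ofReal p) volume +
      R * (∫⁻ z, ballSup (fderiv ℝ f) R z ^ p) ^ (1 / p) := by
  have hp0 : 0 < p := zero_lt_one.trans_le hp
  have hmeas := (hf.continuous_fderiv one_ne_zero).measurable_ballSup R
  have hN : eLpNorm f (ENNReal.ofReal p) volume = (∫⁻ z, ‖f z‖ₑ ^ p) ^ (1 / p) := by
    rw [eLpNorm_eq_lintegral_rpow_enorm_toReal (by simpa using hp0) ENNReal.ofReal_ne_top,
      ENNReal.toReal_ofReal hp0.le]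
  calc (∫⁻ z, ballSup f R z ^ p) ^ (1 / p)
      ≤ (∫⁻ z, (‖f z‖ₑ + R * ballSup (fderiv ℝ f) R z) ^ p) ^ (1 / p) := by
        gcongr with z
        simpa using (hf.differentiable one_ne_zero).ballSup_le_add_mul_ballSup_fderiv R z
    _ ≤ (∫⁻ z, ‖f z‖ₑ ^ p) ^ (1 / p) +
          (∫⁻ z, (R * ballSup (fderiv ℝ f) R z) ^ p) ^ (1 / p) :=
        ENNReal.lintegral_Lp_add_le hf.continuous.enorm.measurable.aemeasurable
          (hmeas.const_mul _).aemeasurable hp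
    _ = _ := by rw [hN, ENNReal.rpow_lintegral_const_mul_rpow hp0 _ hmeas]

theorem ContDiff.Anorm_add_le {κ : ℝ} (hf : ContDiff ℝ 1 f) (hp : 1 ≤ p)
    (hκ : 0 ≤ κ + p) :
    Anorm (κ + p) p f ≤ eLpNorm f (ENNReal.ofReal p) volume + Anorm κ p (fderiv ℝ f) := by
  have hp0 : 0 < p := zero_lt_one.trans_le hp
  refine iSup_le fun R => ?_
  simp only [iSup_closedBall_ofReal_norm_rpow hp0]
  calc _ ≤ ENNReal.ofReal (1 + R) ^ (-((κ + p) / p)) * (eLpNorm f (ENNReal.ofReal p) volume +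
          R * (ENNReal.ofReal (1 + R) ^ (κ / p) * Anorm κ p (fderiv ℝ f))) := by
        gcongr
        exact (hf.rpow_lintegral_ballSup_le hp R).trans
          (by gcongr; exact rpow_lintegral_ballSup_le_mul_Anorm hp0 _ R)
    _ ≤ _ := ENNReal.ofReal_one_add_rpow_neg_mul_le hp0 hκ R _ _

end Estimate

theorem statement3 (d : ℕ) (p κ : ℝ) (hp : 1 ≤ p) (hκ : (d : ℝ) ≤ κ)
    (f : E d → ℂ) (hf : ContDiff ℝ 1 f)
    (hLp : MemLp f (ENNReal.ofReal p) volume)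
    (hgrad : Anorm κ p (fderiv ℝ f) < ⊤) :
    Anorm (κ + p) p f ≤ eLpNorm f (ENNReal.ofReal p) volume + Anorm κ p (fderiv ℝ f) ∧
      Anorm (κ + p) p f < ⊤ := by
  have hbound := hf.Anorm_add_le hp (by linarith [(Nat.cast_nonneg d : (0 : ℝ) ≤ d)])
  exact ⟨hbound, hbound.trans_lt (ENNReal.add_lt_top.2 ⟨hLp.eLpNorm_lt_top, hgrad⟩)⟩
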